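/- arXiv:2103.13478 — 5 statements merged into one kernel-verified Lean document; each statement's English description precedes it below -/
import Mathlib

section
/- Fix k ≥ 1, a ∈ ℂ, and x_1 ∈ ℂ. Define f_n recursively by f_0 = x_1, f_1 = ... = f_{k-1} = 0, f_k = a·e^{x_1}, and f_{n+k} = a·e^{x_1}·B_n(f_1,...,f_n) for n ≥ 1, where B_n is the complete Bell polynomial. Then f_{kn+j} = 0 for all n ≥ 0 and 1 ≤ j ≤ k-1. -/
/-!
Every monomial of `B_{n,k}(x_1, …, x_{n-k+1})` has weight `n`, so if `d ∤ n` each monomial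
contains some `x_i` with `d ∤ i`. Hence Bell polynomials vanish at index `n` with `d ∤ n`
whenever their arguments vanish at indices not divisible by `d`, and a strong induction along
the recurrence `f_{n+k} = a e^{x_1} B_n(f_1, …, f_n)` propagates the vanishing of `f` off the
multiples of `k` from the initial segment `f_1 = ⋯ = f_{k-1} = 0`.
-/

/-- The partial (incomplete) exponential Bell polynomial `B_{n,k}(x_1, …, x_{n-k+1})`,
given by the explicit sum
`∑ n!/(c_1!⋯c_{n-k+1}!) (x_1/1!)^{c_1} ⋯ (x_{n-k+1}/(n-k+1)!)^{c_{n-k+1}}`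
over all `c_i ≥ 0` with `∑ i·c_i = n` and `∑ c_i = k`. -/
def partialBell {K : Type*} [Field K] (n k : ℕ) (x : ℕ → K) : K :=
  ∑ c ∈ (Fintype.piFinset fun _ : Fin (n - k + 1) => Finset.range (n + 1)).filter
      (fun c => (∑ i, (i.1 + 1) * c i) = n ∧ (∑ i, c i) = k),
    (Nat.factorial n : K) * ∏ i : Fin (n - k + 1),
      x (i.1 + 1) ^ c i /
        ((Nat.factorial (c i) : K) * (Nat.factorial (i.1 + 1) : K) ^ c i)

/-- The complete exponential Bell polynomial `B_n(x_1, …, x_n)`, with `B_0 = 1`. -/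
def completeBell {K : Type*} [Field K] (n : ℕ) (x : ℕ → K) : K :=
  if n = 0 then 1 else ∑ k ∈ Finset.Icc 1 n, partialBell n k x

section BellVanishing

variable {K : Type*} [Field K] {d n : ℕ} {x : ℕ → K}

theorem partialBell_eq_zero_of_not_dvd (hn : ¬ d ∣ n) (hx : ∀ i, ¬ d ∣ i → i ≤ n → x i = 0)
    (k : ℕ) : partialBell n k x = 0 := by
  refine Finset.sum_eq_zero fun c hc => ?_
  have hweight : ∑ i, (i.1 + 1) * c i = n := (Finset.mem_filter.mp hc).2.1
  obtain ⟨i, hci, hdi⟩ : ∃ i : Fin (n - k + 1), c i ≠ 0 ∧ ¬ d ∣ i.1 + 1 := by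
    by_contra! hall
    refine hn (hweight ▸ Finset.dvd_sum fun i _ => ?_)
    by_cases hci : c i = 0
    · simp [hci]
    · exact (hall i hci).mul_right _
  have hin : i.1 + 1 ≤ n :=
    calc i.1 + 1 ≤ (i.1 + 1) * c i := Nat.le_mul_of_pos_right _ (Nat.pos_of_ne_zero hci)
      _ ≤ ∑ j, (j.1 + 1) * c j :=
        Finset.single_le_sum (f := fun j : Fin (n - k + 1) => (j.1 + 1) * c j)
          (fun j _ => Nat.zero_le _) (Finset.mem_univ i)
      _ = n := hweight
  have hxi : x (i.1 + 1) = 0 := hx _ hdi hin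
  rw [Finset.prod_eq_zero (Finset.mem_univ i) (by rw [hxi, zero_pow hci, zero_div]), mul_zero]

theorem completeBell_eq_zero_of_not_dvd (hn : ¬ d ∣ n)
    (hx : ∀ i, ¬ d ∣ i → i ≤ n → x i = 0) : completeBell n x = 0 := by
  have hn0 : n ≠ 0 := by rintro rfl; exact hn (dvd_zero d)
  rw [completeBell, if_neg hn0]
  exact Finset.sum_eq_zero fun k _ => partialBell_eq_zero_of_not_dvd hn hx k

end BellVanishing

theorem apply_eq_zero_of_not_dvd_of_completeBell_rec {K : Type*} [Field K] {k : ℕ} (hk : 0 < k)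
    (c : K) {f : ℕ → K} (hinit : ∀ j, 1 ≤ j → j < k → f j = 0)
    (hrec : ∀ n, 1 ≤ n → f (n + k) = c * completeBell n f) :
    ∀ m, ¬ k ∣ m → f m = 0 := by
  intro m
  induction m using Nat.strong_induction_on with
  | _ m ih =>
    intro hm
    have hm0 : m ≠ 0 := by rintro rfl; exact hm (dvd_zero k)
    rcases lt_or_ge m k with hlt | hge
    · exact hinit m (by omega) hlt
    · obtain ⟨n, rfl⟩ : ∃ n, m = n + k := ⟨m - k, by omega⟩
      have hn : ¬ k ∣ n := fun h => hm (h.add dvd_rfl)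
      have hn0 : n ≠ 0 := by rintro rfl; exact hn (dvd_zero k)
      rw [hrec n (by omega),
        completeBell_eq_zero_of_not_dvd hn fun i hi hin => ih i (by omega) hi, mul_zero]

open Complex in
theorem autonomous_vanish_general (k : ℕ) (hk : 1 ≤ k) (a x₁ : ℂ) (f : ℕ → ℂ)
    (hinit : ∀ j, 1 ≤ j → j < k → f j = 0)
    (hrec : ∀ n, 1 ≤ n → f (n + k) = a * exp x₁ * completeBell n f) :
    ∀ n j, 1 ≤ j → j ≤ k - 1 → f (k * n + j) = 0 := by
  intro n j hj hjk
  refine apply_eq_zero_of_not_dvd_of_completeBell_rec hk _ hinit hrec _ ?_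
  rw [Nat.dvd_add_right (dvd_mul_right k n)]
  exact Nat.not_dvd_of_pos_of_lt hj (by omega)

open Complex in
/-- With initial data `(x₁, 0, …, 0)`, the autonomous functions vanish off multiples of `k`:
`f_{kn+j} = 0` for `1 ≤ j ≤ k-1`. -/
theorem autonomous_vanish (k : ℕ) (hk : 1 ≤ k) (a x₁ : ℂ) (f : ℕ → ℂ)
    (h0 : f 0 = x₁)
    (hinit : ∀ j, 1 ≤ j → j < k → f j = 0)
    (hfk : f k = a * exp x₁)
    (hrec : ∀ n, 1 ≤ n → f (n + k) = a * exp x₁ * completeBell n f) :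
    ∀ n j, 1 ≤ j → j ≤ k - 1 → f (k * n + j) = 0 :=
  autonomous_vanish_general k hk a x₁ f hinit hrec
end

section
/- Fix k ≥ 1 and a ∈ ℂ, and x_1 ∈ ℂ. Define f_n recursively by f_0 = x_1, f_1 = ... = f_{k-1} = 0, f_k = a·e^{x_1}, and f_{n+k} = a·e^{x_1}·B_n(f_1,...,f_n). Define A_1 = a and A_{n+2} = ∑_{i=0}^{n} C(kn+k-1, ki+k-1)·A_{n-i+1}·A_{i+1} for n ≥ 0. Then f_{kn} = A_n · e^{n x_1} for all n ≥ 1. -/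
/-!
Index the monomials of `B_n` by multiplicity vectors `c : ℕ →₀ ℕ` (`c j` blocks of size
`j + 1`, so `∑ (j + 1) c_j = n`). Writing `(n + 1)! = n! · ∑ (i + 1) c_i` and removing one
block of size `i + 1` gives `B_{n+1} = ∑_i C(n, i) x_{i+1} B_{n-i}`. In that recurrence for
`B_m` with `k ∤ m` every term has a factor `x_j` or `B_j` with `k ∤ j`, `j ≤ m`, so the delayed
recursion `f_{n+k} = a e^{x₁} B_n(f)` forces `f` and `B_•(f)` to vanish off the multiples of `k`.
For `n + 1 = k(m + 1)` only the terms with `i + 1 = k(j + 1)` survive, and they show that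
`a B_{km}(f)` obeys the recurrence of `A_{m+1} e^{m x₁}`; finally
`f_{k(m+1)} = e^{x₁} · a B_{km}(f)`.
-/

open Finset Finsupp
open scoped Nat

lemma weight_succ_eq_weight_add_degree (c : ℕ →₀ ℕ) :
    weight (· + 1) c = weight id c + c.degree := by
  simp [weight_apply, degree_eq_weight_one, ← Finsupp.sum_add, mul_add]

lemma add_degree_le_weight_succ {c : ℕ →₀ ℕ} {j : ℕ} (hj : c j ≠ 0) :
    j + c.degree ≤ weight (· + 1) c := by
  rw [weight_succ_eq_weight_add_degree]
  exact Nat.add_le_add_right (le_weight_of_ne_zero' id hj) _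

lemma support_subset_range_weight_succ (c : ℕ →₀ ℕ) :
    c.support ⊆ range (weight (· + 1) c) := fun _ hj =>
  mem_range.2 (le_weight_of_ne_zero' (· + 1) (mem_support_iff.1 hj))


lemma degree_le_weight_succ (c : ℕ →₀ ℕ) : c.degree ≤ weight (· + 1) c := by
  rw [weight_succ_eq_weight_add_degree]
  exact Nat.le_add_left _ _

lemma support_subset_range_sub_degree (c : ℕ →₀ ℕ) :
    c.support ⊆ range (weight (· + 1) c - c.degree + 1) := fun _ hj => by
  have := add_degree_le_weight_succ (mem_support_iff.1 hj)
  exact mem_range.2 (by omega)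

section ExtendFin

variable {M : Type*} [Zero M] {m : ℕ}

noncomputable def extendFin (d : Fin m → M) : ℕ →₀ M :=
  embDomain Fin.valEmbedding (equivFunOnFinite.symm d)

lemma extendFin_apply_val (d : Fin m → M) (i : Fin m) : extendFin d (i : ℕ) = d i := by
  simpa [extendFin] using embDomain_apply_self Fin.valEmbedding (equivFunOnFinite.symm d) i

lemma extendFin_restrict {c : ℕ →₀ M} (hc : c.support ⊆ range m) :
    extendFin (fun i : Fin m => c i) = c := by
  ext j
  by_cases hj : j < m
  · exact extendFin_apply_val _ ⟨j, hj⟩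
  · rw [extendFin, embDomain_of_notMem_range _ _ _ (by simpa using hj),
      eq_comm, ← notMem_support_iff]
    exact fun h => hj (mem_range.1 (hc h))

lemma prod_extendFin {N : Type*} [CommMonoid N] (d : Fin m → M) (g : ℕ → M → N)
    (hg : ∀ j, g j 0 = 1) : (extendFin d).prod g = ∏ i : Fin m, g i (d i) := by
  rw [extendFin, prod_embDomain, prod_fintype _ _ fun _ => hg _]
  rfl

lemma weight_extendFin (w : ℕ → ℕ) (d : Fin m → ℕ) :
    weight w (extendFin d) = ∑ i : Fin m, w i * d i := by
  rw [weight_apply, extendFin, sum_embDomain, sum_fintype _ _ (by simp)]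
  exact sum_congr rfl fun i _ => mul_comm _ _

lemma degree_extendFin (d : Fin m → ℕ) : (extendFin d).degree = ∑ i, d i := by
  simp [degree_eq_weight_one, weight_extendFin]

end ExtendFin

section BellSum

noncomputable def bellIndex (n : ℕ) : Finset (ℕ →₀ ℕ) :=
  ((Fintype.piFinset fun _ : Fin n => range (n + 1)).image extendFin).filter
    fun c => weight (· + 1) c = n

lemma mem_bellIndex {n : ℕ} {c : ℕ →₀ ℕ} : c ∈ bellIndex n ↔ weight (· + 1) c = n := by
  refine ⟨fun hc => (mem_filter.1 hc).2, fun hc => mem_filter.2 ⟨mem_image.2 ?_, hc⟩⟩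
  refine ⟨fun i => c i, Fintype.mem_piFinset.2 fun i => ?_, extendFin_restrict ?_⟩
  · exact mem_range.2 <| Nat.lt_succ_of_le <| (le_weight _ (Nat.succ_ne_zero _) c).trans hc.le
  · exact hc ▸ support_subset_range_weight_succ c

variable {K : Type*} [Field K]

def bellFactor (x : ℕ → K) (j t : ℕ) : K :=
  x (j + 1) ^ t / ((t ! : K) * ((j + 1)! : K) ^ t)

noncomputable def bellMonomial (x : ℕ → K) (c : ℕ →₀ ℕ) : K :=
  c.prod (bellFactor x)

lemma bellFactor_zero (x : ℕ → K) (j : ℕ) : bellFactor x j 0 = 1 := by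
  simp [bellFactor]

lemma partialBell_eq_sum (n k : ℕ) (x : ℕ → K) :
    partialBell n k x =
      ∑ c ∈ (bellIndex n).filter (·.degree = k), (n ! : K) * bellMonomial x c := by
  have hsupp : ∀ c ∈ (bellIndex n).filter (·.degree = k), c.support ⊆ range (n - k + 1) := by
    intro c hc
    simp only [mem_filter, mem_bellIndex] at hc
    exact hc.1 ▸ hc.2 ▸ support_subset_range_sub_degree c
  refine sum_nbij' extendFin (fun c i => c i) (fun d hd => ?_) (fun c hc => ?_)
    (fun d _ => funext (extendFin_apply_val d)) (fun c hc => extendFin_restrict (hsupp c hc))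
    (fun d _ => ?_)
  · simp only [mem_filter, Fintype.mem_piFinset, mem_range] at hd
    simp only [mem_filter, mem_bellIndex, weight_extendFin, degree_extendFin]
    exact hd.2
  · have hweight := weight_extendFin (· + 1) (fun i : Fin (n - k + 1) => c i)
    have hdegree := degree_extendFin (fun i : Fin (n - k + 1) => c i)
    rw [extendFin_restrict (hsupp c hc)] at hweight hdegree
    simp only [mem_filter, mem_bellIndex] at hc
    simp only [mem_filter, Fintype.mem_piFinset, mem_range]
    refine ⟨fun i => Nat.lt_succ_of_le ((le_weight _ (Nat.succ_ne_zero _) c).trans hc.1.le),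
      ?_, hdegree ▸ hc.2⟩
    exact hweight.symm.trans hc.1
  · rw [bellMonomial, prod_extendFin _ _ (bellFactor_zero x)]
    rfl

lemma completeBell_eq_sum (n : ℕ) (x : ℕ → K) :
    completeBell n x = ∑ c ∈ bellIndex n, (n ! : K) * bellMonomial x c := by
  rcases n.eq_zero_or_pos with rfl | hn
  · have hindex : bellIndex 0 = {0} := by
      ext c
      rw [mem_bellIndex, mem_singleton]
      refine ⟨fun h => (degree_eq_zero_iff c).1 ?_, fun h => h ▸ map_zero _⟩
      exact Nat.eq_zero_of_le_zero (h ▸ degree_le_weight_succ c)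
    simp [completeBell, hindex, bellMonomial]
  · have hdegree : ∀ c ∈ bellIndex n, c.degree ∈ Icc 1 n := fun c hc => by
      rw [mem_bellIndex] at hc
      refine mem_Icc.2 ⟨Nat.one_le_iff_ne_zero.2 fun h => ?_, hc ▸ degree_le_weight_succ c⟩
      rw [degree_eq_zero_iff] at h
      rw [h, map_zero] at hc
      omega
    rw [completeBell, if_neg hn.ne', ← sum_fiberwise_of_maps_to hdegree]
    exact sum_congr rfl fun k _ => partialBell_eq_sum n k x

end BellSum

section Recurrence

variable {K : Type*} [Field K] [CharZero K]

lemma bellFactor_succ_mul (x : ℕ → K) (j t : ℕ) :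
    bellFactor x j (t + 1) * ((t + 1) * (j + 1)! : K) = x (j + 1) * bellFactor x j t := by
  unfold bellFactor
  rw [Nat.factorial_succ t, pow_succ, pow_succ]
  have hfac : ((j + 1)! : K) ≠ 0 := Nat.cast_ne_zero.2 (Nat.factorial_ne_zero _)
  push_cast
  field_simp

lemma bellMonomial_add_single_mul (x : ℕ → K) (c : ℕ →₀ ℕ) (i : ℕ) :
    bellMonomial x (c + single i 1) * ((c i + 1) * (i + 1)! : K) =
      x (i + 1) * bellMonomial x c := by
  have hsplit : ∀ d : ℕ →₀ ℕ,
      bellMonomial x d = bellFactor x i (d i) * (d.erase i).prod (bellFactor x) :=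
    fun d => (mul_prod_erase' d i _ (bellFactor_zero x)).symm
  rw [hsplit, hsplit c, erase_add, erase_single, add_zero, Finsupp.add_apply, single_eq_same]
  linear_combination (c.erase i).prod (bellFactor x) * bellFactor_succ_mul x i (c i)

lemma sum_bellIndex_succ_mul_apply (x : ℕ → K) {n i : ℕ} (hi : i ≤ n) :
    ∑ c ∈ bellIndex (n + 1), ((c i * (i + 1) : ℕ) : K) * (n ! * bellMonomial x c) =
      n.choose i * x (i + 1) * ∑ c ∈ bellIndex (n - i), ((n - i)! : K) * bellMonomial x c := by
  have himage : (bellIndex (n - i)).image (· + single i 1) ⊆ bellIndex (n + 1) := by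
    intro d hd
    obtain ⟨c, hc, rfl⟩ := mem_image.1 hd
    rw [mem_bellIndex] at hc ⊢
    rw [map_add, hc, weight_single, smul_eq_mul, one_mul]
    omega
  have hvanish : ∀ c ∈ bellIndex (n + 1), c ∉ (bellIndex (n - i)).image (· + single i 1) →
      ((c i * (i + 1) : ℕ) : K) * (n ! * bellMonomial x c) = 0 := by
    intro c hc hnot
    suffices c i = 0 by simp [this]
    by_contra h
    refine hnot (mem_image.2 ⟨c - single i 1, mem_bellIndex.2 ?_, sub_add_single_one_cancel h⟩)
    have := weight_sub_single_add (w := (· + 1)) h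
    rw [mem_bellIndex] at hc
    omega
  rw [← sum_subset himage hvanish, sum_image fun _ _ _ _ => add_right_cancel, Finset.mul_sum]
  refine sum_congr rfl fun c _ => ?_
  have hchoose : (n.choose i * i ! * (n - i)! : K) = n ! := by
    exact_mod_cast Nat.choose_mul_factorial_mul_factorial hi
  have hsucc : ((i + 1)! : K) = (i + 1) * i ! := by
    push_cast [Nat.factorial_succ]; ring
  rw [Finsupp.add_apply, single_eq_same]
  push_cast
  linear_combination (n.choose i * (n - i)! : K) * bellMonomial_add_single_mul x c i
    - ((c i + 1) * (i + 1) * bellMonomial x (c + single i 1) : K) * hchoose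
    - (n.choose i * (n - i)! * (c i + 1) * bellMonomial x (c + single i 1) : K) * hsucc

theorem completeBell_succ (x : ℕ → K) (n : ℕ) :
    completeBell (n + 1) x =
      ∑ i ∈ range (n + 1), n.choose i * x (i + 1) * completeBell (n - i) x := by
  have hexpand : ∀ c ∈ bellIndex (n + 1), ((n + 1)! : K) * bellMonomial x c =
      ∑ i ∈ range (n + 1), ((c i * (i + 1) : ℕ) : K) * (n ! * bellMonomial x c) := by
    intro c hc
    rw [mem_bellIndex] at hc
    have hweight : weight (· + 1) c = ∑ i ∈ range (n + 1), c i * (i + 1) := by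
      rw [weight_apply, sum_of_support_subset c (hc ▸ support_subset_range_weight_succ c) _
        (by simp)]
      rfl
    rw [← Finset.sum_mul, ← Nat.cast_sum, ← hweight, hc, Nat.factorial_succ]
    push_cast
    ring
  simp_rw [completeBell_eq_sum]
  rw [sum_congr rfl hexpand, Finset.sum_comm]
  exact sum_congr rfl fun i hi =>
    sum_bellIndex_succ_mul_apply x (Nat.le_of_lt_succ (mem_range.1 hi))

end Recurrence

lemma sum_range_mul_eq_sum_sum {M : Type*} [AddCommMonoid M] (f : ℕ → M) (k m : ℕ) :
    ∑ i ∈ range (k * m), f i = ∑ j ∈ range m, ∑ r ∈ range k, f (k * j + r) := by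
  induction m with
  | zero => simp
  | succ m ih => rw [Nat.mul_succ, sum_range_add, ih, sum_range_succ]

section Sparse

variable {K : Type*} [Field K] [CharZero K] {k : ℕ} {x : ℕ → K}

lemma completeBell_eq_zero_of_not_dvd_s11 {m : ℕ}
    (hx : ∀ j, 0 < j → j ≤ m → ¬ k ∣ j → x j = 0) (hm : ¬ k ∣ m) : completeBell m x = 0 := by
  induction m using Nat.strong_induction_on with
  | _ m ih =>
    obtain _ | n := m
    · exact absurd (dvd_zero k) hm
    rw [completeBell_succ]
    refine sum_eq_zero fun i hi => ?_
    have hin : i ≤ n := Nat.le_of_lt_succ (mem_range.1 hi)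
    by_cases hdvd : k ∣ i + 1
    · have hrest : ¬ k ∣ n - i := fun h =>
        hm (by rw [show n + 1 = i + 1 + (n - i) by omega]; exact dvd_add hdvd h)
      rw [ih (n - i) (by omega) (fun j hj hjn => hx j hj (by omega)) hrest, mul_zero]
    · rw [hx (i + 1) (by omega) (by omega) hdvd, mul_zero, zero_mul]

lemma apply_eq_zero_of_not_dvd (hk : 0 < k) {c : K} (hinit : ∀ j, 1 ≤ j → j < k → x j = 0)
    (hrec : ∀ n, 1 ≤ n → x (n + k) = c * completeBell n x) :
    ∀ j, 0 < j → ¬ k ∣ j → x j = 0 := by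
  intro j
  induction j using Nat.strong_induction_on with
  | _ j ih =>
    intro hj hdvd
    by_cases hjk : j < k
    · exact hinit j hj hjk
    obtain ⟨n, rfl⟩ : ∃ n, j = n + k := ⟨j - k, by omega⟩
    have hn : ¬ k ∣ n := fun h => hdvd (dvd_add h dvd_rfl)
    have hn1 : 1 ≤ n := Nat.one_le_iff_ne_zero.2 fun h => hn (h ▸ dvd_zero k)
    rw [hrec n hn1, completeBell_eq_zero_of_not_dvd_s11 (fun i hi hin => ih i (by omega) hi) hn,
      mul_zero]

lemma completeBell_mul_succ (hk : 0 < k) (hx : ∀ j, 0 < j → ¬ k ∣ j → x j = 0) (m : ℕ) :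
    completeBell (k * (m + 1)) x = ∑ j ∈ range (m + 1),
      ((k * m + k - 1).choose (k * j + k - 1) : K) * x (k * (j + 1)) *
        completeBell (k * (m - j)) x := by
  have hN : k * (m + 1) = k * m + k - 1 + 1 := by rw [Nat.mul_succ]; omega
  rw [hN, completeBell_succ, ← hN, sum_range_mul_eq_sum_sum]
  refine sum_congr rfl fun j hj => ?_
  have hjm : k * j ≤ k * m := Nat.mul_le_mul_left k (Nat.le_of_lt_succ (mem_range.1 hj))
  rw [sum_eq_single (k - 1) (fun r hr hrk => ?_) (fun h => absurd (mem_range.2 (by omega)) h)]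
  · have hx_index : k * j + (k - 1) + 1 = k * (j + 1) := by rw [Nat.mul_succ]; omega
    have hbell_index : k * m + k - 1 - (k * j + (k - 1)) = k * (m - j) := by
      rw [Nat.mul_sub]; omega
    rw [hx_index, hbell_index, show k * j + (k - 1) = k * j + k - 1 by omega]
  · have hr : ¬ k ∣ k * j + r + 1 := fun h => by
      rw [add_assoc, Nat.dvd_add_right (dvd_mul_right k j)] at h
      have := Nat.le_of_dvd (Nat.succ_pos r) h
      have := mem_range.1 hr
      omega
    rw [hx _ (Nat.succ_pos _) hr, mul_zero, zero_mul]

theorem apply_mul_eq_mul_pow (hk : 0 < k) {a E : K} {A : ℕ → K}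
    (hinit : ∀ j, 1 ≤ j → j < k → x j = 0) (hxk : x k = a * E)
    (hrec : ∀ n, 1 ≤ n → x (n + k) = a * E * completeBell n x) (hA1 : A 1 = a)
    (hArec : ∀ n, A (n + 2) = ∑ i ∈ range (n + 1),
      ((k * n + k - 1).choose (k * i + k - 1) : K) * A (n - i + 1) * A (i + 1)) :
    ∀ n, 1 ≤ n → x (k * n) = A n * E ^ n := by
  have hstep : ∀ m, x (k * (m + 1)) = a * E * completeBell (k * m) x := by
    intro m
    rcases m.eq_zero_or_pos with rfl | hm
    · simp [completeBell, hxk]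
    · rw [Nat.mul_succ]
      exact hrec _ (Nat.mul_pos hk hm)
  have hmain : ∀ m, a * completeBell (k * m) x = A (m + 1) * E ^ m := by
    intro m
    induction m using Nat.strong_induction_on with
    | _ m ih =>
      obtain _ | m := m
      · simp [completeBell, hA1]
      rw [completeBell_mul_succ hk (apply_eq_zero_of_not_dvd hk hinit hrec), Finset.mul_sum,
        hArec, Finset.sum_mul]
      refine sum_congr rfl fun j hj => ?_
      have hjm : j ≤ m := Nat.le_of_lt_succ (mem_range.1 hj)
      have hpow : E ^ (m + 1) = E ^ (j + 1) * E ^ (m - j) := by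
        rw [← pow_add]; congr 1; omega
      rw [hstep, hpow]
      set C : K := (((k * m + k - 1).choose (k * j + k - 1) : ℕ) : K)
      linear_combination C * E * a * completeBell (k * (m - j)) x * ih j (by omega)
        + C * A (j + 1) * E ^ (j + 1) * ih (m - j) (by omega)
  intro n hn
  obtain ⟨m, rfl⟩ : ∃ m, n = m + 1 := ⟨n - 1, by omega⟩
  rw [hstep, pow_succ]
  linear_combination E * hmain m

end Sparse

open Complex in
theorem autonomous_at_multiples_general (k : ℕ) (hk : 1 ≤ k) (a x₁ : ℂ) (f : ℕ → ℂ) (A : ℕ → ℂ)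
    (hinit : ∀ j, 1 ≤ j → j < k → f j = 0)
    (hfk : f k = a * exp x₁)
    (hrec : ∀ n, 1 ≤ n → f (n + k) = a * exp x₁ * completeBell n f)
    (hA1 : A 1 = a)
    (hArec : ∀ n, A (n + 2) =
      ∑ i ∈ Finset.range (n + 1),
        (Nat.choose (k * n + k - 1) (k * i + k - 1) : ℂ) * A (n - i + 1) * A (i + 1)) :
    ∀ n, 1 ≤ n → f (k * n) = A n * exp (n * x₁) := by
  intro n hn
  rw [exp_nat_mul]
  exact apply_mul_eq_mul_pow hk hinit hfk hrec hA1 hArec n hn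

open Complex in
/-- With initial data `(x₁, 0, …, 0)`, `f_{kn} = Aₙ·e^{n x₁}` where `A₁ = a` and
`A_{n+2} = ∑_{i=0}^{n} C(kn+k-1, ki+k-1)·A_{n-i+1}·A_{i+1}`. -/
theorem autonomous_at_multiples (k : ℕ) (hk : 1 ≤ k) (a x₁ : ℂ) (f : ℕ → ℂ) (A : ℕ → ℂ)
    (h0 : f 0 = x₁)
    (hinit : ∀ j, 1 ≤ j → j < k → f j = 0)
    (hfk : f k = a * exp x₁)
    (hrec : ∀ n, 1 ≤ n → f (n + k) = a * exp x₁ * completeBell n f)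
    (hA1 : A 1 = a)
    (hArec : ∀ n, A (n + 2) =
      ∑ i ∈ Finset.range (n + 1),
        (Nat.choose (k * n + k - 1) (k * i + k - 1) : ℂ) * A (n - i + 1) * A (i + 1)) :
    ∀ n, 1 ≤ n → f (k * n) = A n * exp (n * x₁) :=
  autonomous_at_multiples_general k hk a x₁ f A hinit hfk hrec hA1 hArec
end

section
/- Fix k ≥ 1, a ∈ ℂ, c ∈ ℂ with c ≠ 0, and a choice of logarithm ln c. Let f_n(x_1,...,x_k; a) be the complete exponential autonomous functions of order k: f_{j-1} = x_j for 1 ≤ j ≤ k, f_k = a·e^{x_1}, f_{n+k} = a·e^{x_1}·B_n(f_1,...,f_n). Then for all n ≥ 1, f_n(x_1 + k·ln c, c·x_2, c^2·x_3, ..., c^{k-1}·x_k; a) = c^n · f_n(x_1, x_2, ..., x_k; a). -/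
section Homogeneity

variable {K : Type*} [Field K]

theorem partialBell_weighted_smul (n j : ℕ) (c : K) (x y : ℕ → K)
    (h : ∀ i, 1 ≤ i → i ≤ n - j + 1 → y i = c ^ i * x i) :
    partialBell n j y = c ^ n * partialBell n j x := by
  unfold partialBell
  rw [Finset.mul_sum]
  refine Finset.sum_congr rfl fun d hd => ?_
  obtain ⟨-, hweight, -⟩ := Finset.mem_filter.mp hd
  have hfactor : ∀ i : Fin (n - j + 1),
      y (i.1 + 1) ^ d i / ((Nat.factorial (d i) : K) * (Nat.factorial (i.1 + 1) : K) ^ d i)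
        = c ^ ((i.1 + 1) * d i) *
          (x (i.1 + 1) ^ d i / ((Nat.factorial (d i) : K) * (Nat.factorial (i.1 + 1) : K) ^ d i)) := by
    intro i
    rw [h (i.1 + 1) (by omega) (by omega), mul_pow, pow_mul]
    ring
  rw [Finset.prod_congr rfl fun i _ => hfactor i, Finset.prod_mul_distrib,
    Finset.prod_pow_eq_pow_sum, hweight]
  ring

theorem completeBell_weighted_smul (n : ℕ) (c : K) (x y : ℕ → K)
    (h : ∀ i, 1 ≤ i → i ≤ n → y i = c ^ i * x i) :
    completeBell n y = c ^ n * completeBell n x := by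
  unfold completeBell
  split_ifs with hn
  · simp [hn]
  · rw [Finset.mul_sum]
    refine Finset.sum_congr rfl fun j hj => ?_
    obtain ⟨hj1, -⟩ := Finset.mem_Icc.mp hj
    exact partialBell_weighted_smul n j c x y fun i h1 h2 => h i h1 (by omega)

end Homogeneity

theorem eq_pow_mul_of_bell_recurrence {K : Type*} [Field K] (k : ℕ) (hk : 1 ≤ k)
    (A c : K) (f g : ℕ → K)
    (hinit : ∀ n, 1 ≤ n → n ≤ k → g n = c ^ n * f n)
    (hfrec : ∀ n, 1 ≤ n → f (n + k) = A * completeBell n f)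
    (hgrec : ∀ n, 1 ≤ n → g (n + k) = c ^ k * A * completeBell n g) :
    ∀ n, 1 ≤ n → g n = c ^ n * f n := by
  intro n
  induction n using Nat.strong_induction_on with
  | _ n ih =>
    intro hn
    by_cases hnk : n ≤ k
    · exact hinit n hn hnk
    obtain ⟨m, rfl⟩ : ∃ m, n = m + k := ⟨n - k, by omega⟩
    rw [hgrec m (by omega), hfrec m (by omega),
      completeBell_weighted_smul m c f g fun i hi1 hi2 => ih i (by omega) hi1, pow_add]
    ring

open Complex in
theorem autonomous_scale_initial_general (k : ℕ) (hk : 1 ≤ k) (a c l : ℂ)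
    (hl : exp l = c) (x : ℕ → ℂ) (f g : ℕ → ℂ)
    (hfinit : ∀ j, 1 ≤ j → j ≤ k → f (j - 1) = x j)
    (hfk : f k = a * exp (x 1))
    (hfrec : ∀ n, 1 ≤ n → f (n + k) = a * exp (x 1) * completeBell n f)
    (hginit : ∀ j, 2 ≤ j → j ≤ k → g (j - 1) = c ^ (j - 1) * x j)
    (hgk : g k = a * exp (x 1 + k * l))
    (hgrec : ∀ n, 1 ≤ n → g (n + k) = a * exp (x 1 + k * l) * completeBell n g) :
    ∀ n, 1 ≤ n → g n = c ^ n * f n := by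
  have hexp : exp (x 1 + k * l) = c ^ k * exp (x 1) := by
    rw [exp_add, exp_nat_mul, hl, mul_comm]
  refine eq_pow_mul_of_bell_recurrence k hk (a * exp (x 1)) c f g (fun n hn hnk => ?_) hfrec
    fun n hn => by rw [hgrec n hn, hexp]; ring
  rcases hnk.lt_or_eq with hlt | rfl
  · have hf := hfinit (n + 1) (by omega) (by omega)
    have hg := hginit (n + 1) (by omega) (by omega)
    rw [Nat.add_sub_cancel] at hf hg
    rw [hg, hf]
  · rw [hgk, hfk, hexp]
    ring

open Complex in
/-- Scaling identity: if `g` is the autonomous sequence of order `k` for initial data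
`(x₁ + k·ln c, c·x₂, …, c^{k-1}·x_k)` and `f` the one for `(x₁, …, x_k)`, then
`gₙ = cⁿ·fₙ` for all `n ≥ 1`.  Here `l` is a choice of logarithm of `c`, i.e. `exp l = c`. -/
theorem autonomous_scale_initial (k : ℕ) (hk : 1 ≤ k) (a c l : ℂ) (hc : c ≠ 0)
    (hl : exp l = c) (x : ℕ → ℂ) (f g : ℕ → ℂ)
    (hfinit : ∀ j, 1 ≤ j → j ≤ k → f (j - 1) = x j)
    (hfk : f k = a * exp (x 1))
    (hfrec : ∀ n, 1 ≤ n → f (n + k) = a * exp (x 1) * completeBell n f)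
    (hg0 : g 0 = x 1 + k * l)
    (hginit : ∀ j, 2 ≤ j → j ≤ k → g (j - 1) = c ^ (j - 1) * x j)
    (hgk : g k = a * exp (x 1 + k * l))
    (hgrec : ∀ n, 1 ≤ n → g (n + k) = a * exp (x 1 + k * l) * completeBell n g) :
    ∀ n, 1 ≤ n → g n = c ^ n * f n :=
  autonomous_scale_initial_general k hk a c l hl x f g hfinit hfk hfrec hginit hgk hgrec
end

section
/- Fix k ≥ 1 and a ∈ ℂ. Let f_n(x_1,...,x_{2k}; a) be the complete exponential autonomous functions of order 2k: f_{j-1} = x_j for 1 ≤ j ≤ 2k, f_{2k} = a·e^{x_1}, f_{n+2k} = a·e^{x_1}·B_n(f_1,...,f_n). Then for all n ≥ 0, f_n(x_1, -x_2, x_3, -x_4, ..., x_{2k-1}, -x_{2k}; a) = (-1)^n · f_n(x_1, x_2, ..., x_{2k}; a). -/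
/-!
Every monomial `∏ xᵢ ^ cᵢ` of `B_{n,k}` has weight `∑ i·cᵢ = n`, so rescaling `xⱼ ↦ tʲ xⱼ`
multiplies the Bell polynomials `B_{n,k}` and `B_n` by `tⁿ`. With `t = -1` this carries the sign
through the recurrence by strong induction; the term `a·e^{x₁}` at index `2k` needs no sign
because `2k` is even.
-/

open Finset

section Homogeneity

variable {K : Type*} [Field K] (t : K) {n : ℕ} {x y : ℕ → K}

theorem partialBell_eq_pow_mul (k : ℕ) (h : ∀ j, 1 ≤ j → j ≤ n → y j = t ^ j * x j) :
    partialBell n k y = t ^ n * partialBell n k x := by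
  unfold partialBell
  rw [mul_sum]
  refine sum_congr rfl fun c hc => ?_
  obtain ⟨-, hweight, -⟩ := mem_filter.1 hc
  have hfactor : ∀ i : Fin (n - k + 1),
      y (i.1 + 1) ^ c i = t ^ ((i.1 + 1) * c i) * x (i.1 + 1) ^ c i := by
    intro i
    rcases Nat.eq_zero_or_pos (c i) with hci | hci
    · simp [hci]
    · have hle : i.1 + 1 ≤ n := calc
        i.1 + 1 ≤ (i.1 + 1) * c i := Nat.le_mul_of_pos_right _ hci
        _ ≤ ∑ i, (i.1 + 1) * c i :=
          single_le_sum (f := fun i => (i.1 + 1) * c i) (by simp) (mem_univ i)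
        _ = n := hweight
      rw [h _ (by omega) (by omega), mul_pow, pow_mul]
  simp_rw [hfactor, mul_div_assoc, prod_mul_distrib, prod_pow_eq_pow_sum, hweight]
  ring

theorem completeBell_eq_pow_mul (h : ∀ j, 1 ≤ j → j ≤ n → y j = t ^ j * x j) :
    completeBell n y = t ^ n * completeBell n x := by
  unfold completeBell
  split_ifs with hn
  · simp [hn]
  · rw [mul_sum]
    exact sum_congr rfl fun k _ => partialBell_eq_pow_mul t k h

end Homogeneity

open Complex in
/-- Alternating-sign identity for autonomous functions of even order `2k`: if `g` is the
autonomous sequence for initial data `(x₁, -x₂, x₃, -x₄, …, x_{2k-1}, -x_{2k})` and `f`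
the one for `(x₁, …, x_{2k})`, then `gₙ = (-1)ⁿ·fₙ` for all `n ≥ 0`. -/
theorem autonomous_alt_sign (k : ℕ) (hk : 1 ≤ k) (a : ℂ) (x : ℕ → ℂ) (f g : ℕ → ℂ)
    (hfinit : ∀ j, 1 ≤ j → j ≤ 2 * k → f (j - 1) = x j)
    (hfk : f (2 * k) = a * exp (x 1))
    (hfrec : ∀ n, 1 ≤ n → f (n + 2 * k) = a * exp (x 1) * completeBell n f)
    (hginit : ∀ j, 1 ≤ j → j ≤ 2 * k → g (j - 1) = (-1 : ℂ) ^ (j - 1) * x j)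
    (hgk : g (2 * k) = a * exp (x 1))
    (hgrec : ∀ n, 1 ≤ n → g (n + 2 * k) = a * exp (x 1) * completeBell n g) :
    ∀ n, g n = (-1 : ℂ) ^ n * f n := by
  intro n
  induction n using Nat.strong_induction_on with
  | _ n ih =>
    rcases lt_trichotomy n (2 * k) with hlt | rfl | hgt
    · have hg := hginit (n + 1) (by omega) (by omega)
      have hf := hfinit (n + 1) (by omega) (by omega)
      rw [Nat.add_sub_cancel] at hg hf
      rw [hg, hf]
    · rw [hgk, hfk, pow_mul, neg_one_sq, one_pow, one_mul]
    · obtain ⟨m, hm, rfl⟩ : ∃ m, 1 ≤ m ∧ n = m + 2 * k :=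
        ⟨n - 2 * k, by omega, by omega⟩
      rw [hgrec m hm, hfrec m hm, completeBell_eq_pow_mul (-1) fun j _ _ => ih j (by omega),
        pow_add, pow_mul, neg_one_sq, one_pow, mul_one]
      ring
end

section
/- Let A_n be the Euler zigzag numbers (coefficients of sec + tan: sec(t)+tan(t) = ∑_{n≥0} A_n t^n/n!). Then A_{n+2} = ∑_{i=0}^{n} C(n,i) · A_{n-i+1} · A_i for all n ≥ 0. -/
/-!
With `f = sec + tan`, the hypothesis says that `f` is analytic at `0` with `Aₙ = f⁽ⁿ⁾(0)`.
Since `f' = 1 / (1 - sin)`, one finds `f'' = cos / (1 - sin)² = f · f'` (because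
`cos² = (1 - sin)(1 + sin)`), and the Leibniz rule for the `n`-th derivative of `f · f'` at `0`
is exactly the recurrence.
-/

open Filter Topology FormalMultilinearSeries Finset Nat

theorem hasFPowerSeriesAt_ofScalars_of_hasSum {𝕜 : Type*} [RCLike 𝕜] {f : 𝕜 → 𝕜} {c : ℕ → 𝕜}
    {r : ℝ} (hr : 0 < r) (hf : ∀ x : 𝕜, ‖x‖ < r → HasSum (fun n => c n * x ^ n) (f x)) :
    HasFPowerSeriesAt f (ofScalars 𝕜 c) 0 := by
  have hr2 : 0 < r / 2 := half_pos hr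
  have hsum : Summable fun n => ‖ofScalars 𝕜 c n‖ * (r / 2).toNNReal ^ n := by
    refine (hf (r / 2 : ℝ) ?_).summable.norm.congr fun n => ?_
    · rw [RCLike.norm_ofReal, abs_of_pos hr2]; linarith
    · simp [abs_of_pos hr, hr2.le]
  refine ⟨(r / 2).toNNReal, le_radius_of_summable _ hsum, by simpa using hr2, fun {y} hy => ?_⟩
  have hy : ‖y‖ < r / 2 := by
    rwa [Metric.mem_eball, edist_zero_right, ← ofReal_norm, ← ENNReal.ofReal_coe_nnreal,
      Real.coe_toNNReal _ hr2.le, ENNReal.ofReal_lt_ofReal_iff hr2] at hy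
  simpa [ofScalars_apply_eq, mul_comm] using hf y (by linarith)

theorem HasFPowerSeriesAt.iteratedDeriv_eq_factorial_mul {𝕜 : Type*} [NontriviallyNormedField 𝕜]
    [CompleteSpace 𝕜] [CharZero 𝕜] {f : 𝕜 → 𝕜} {c : ℕ → 𝕜} {x : 𝕜}
    (hf : HasFPowerSeriesAt f (ofScalars 𝕜 c) x) (n : ℕ) :
    iteratedDeriv n f x = n ! * c n := by
  have hc := (ofScalars_series_eq_iff 𝕜 _ c).mp
    (hf.analyticAt.hasFPowerSeriesAt.eq_formalMultilinearSeries hf)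
  rw [← congrFun hc n, mul_div_cancel₀ _ (by exact_mod_cast n.factorial_ne_zero)]

theorem iteratedDeriv_add_two_eq_sum_of_deriv_deriv_eq_mul {𝕜 : Type*}
    [NontriviallyNormedField 𝕜] [CompleteSpace 𝕜] {f : 𝕜 → 𝕜} {x : 𝕜} (hf : AnalyticAt 𝕜 f x)
    (hode : deriv (deriv f) =ᶠ[𝓝 x] f * deriv f) (n : ℕ) :
    iteratedDeriv (n + 2) f x = ∑ i ∈ range (n + 1),
      n.choose i * iteratedDeriv (n - i + 1) f x * iteratedDeriv i f x := by
  rw [iteratedDeriv_succ', iteratedDeriv_succ', hode.iteratedDeriv_eq n,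
    iteratedDeriv_mul hf.contDiffAt hf.deriv.contDiffAt]
  refine sum_congr rfl fun i _ => ?_
  rw [← iteratedDeriv_succ']
  ring

section SecAddTan

open Real

theorem one_sub_sin_ne_zero {t : ℝ} (ht : cos t ≠ 0) : 1 - sin t ≠ 0 := by
  intro h
  apply ht
  exact pow_eq_zero_iff two_ne_zero |>.mp
    (by linear_combination (1 + sin t) * h + sin_sq_add_cos_sq t)

theorem hasDerivAt_sec_add_tan {t : ℝ} (ht : cos t ≠ 0) :
    HasDerivAt (fun t => 1 / cos t + tan t) (1 / (1 - sin t)) t := by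
  have hsec : HasDerivAt (fun t => 1 / cos t) (sin t / cos t ^ 2) t := by
    simpa [one_div] using (hasDerivAt_cos t).fun_inv ht
  refine (hsec.add (hasDerivAt_tan ht)).congr_deriv ?_
  field_simp [one_sub_sin_ne_zero ht]
  linear_combination -sin_sq_add_cos_sq t

theorem hasDerivAt_one_div_one_sub_sin {t : ℝ} (ht : 1 - sin t ≠ 0) :
    HasDerivAt (fun t => 1 / (1 - sin t)) (cos t / (1 - sin t) ^ 2) t := by
  simpa [one_div] using ((hasDerivAt_sin t).const_sub 1).fun_inv ht

theorem deriv_deriv_sec_add_tan_eventuallyEq {t : ℝ} (ht : cos t ≠ 0) :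
    deriv (deriv fun t => 1 / cos t + tan t) =ᶠ[𝓝 t]
      (fun t => 1 / cos t + tan t) * deriv fun t => 1 / cos t + tan t := by
  have hcos : ∀ᶠ s in 𝓝 t, cos s ≠ 0 := continuous_cos.continuousAt.eventually_ne ht
  have hderiv : deriv (fun t => 1 / cos t + tan t) =ᶠ[𝓝 t] fun s => 1 / (1 - sin s) :=
    hcos.mono fun s hs => (hasDerivAt_sec_add_tan hs).deriv
  filter_upwards [hderiv.deriv, hderiv, hcos] with s h2 h1 hs
  rw [Pi.mul_apply, h2, h1, (hasDerivAt_one_div_one_sub_sin (one_sub_sin_ne_zero hs)).deriv,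
    tan_eq_sin_div_cos]
  field_simp [one_sub_sin_ne_zero hs]
  linear_combination sin_sq_add_cos_sq s

end SecAddTan

open Real in
/-- The Euler zigzag numbers `Aₙ`, defined by `sec t + tan t = ∑_{n≥0} Aₙ·tⁿ/n!`, satisfy
`A_{n+2} = ∑_{i=0}^{n} C(n,i)·A_{n-i+1}·A_i`. -/
theorem zigzag_recurrence (A : ℕ → ℝ)
    (hA : ∀ t : ℝ, |t| < π / 2 →
      HasSum (fun n : ℕ => A n * t ^ n / (Nat.factorial n : ℝ))
        (1 / Real.cos t + Real.tan t)) :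
    ∀ n, A (n + 2) =
      ∑ i ∈ Finset.range (n + 1), (Nat.choose n i : ℝ) * A (n - i + 1) * A i := by
  have hseries : HasFPowerSeriesAt (fun t => 1 / cos t + tan t)
      (ofScalars ℝ fun n => A n / n !) 0 :=
    hasFPowerSeriesAt_ofScalars_of_hasSum (half_pos pi_pos) fun t ht => by
      simpa only [div_mul_eq_mul_div] using hA t ht
  have hA_eq (n : ℕ) : A n = iteratedDeriv n (fun t => 1 / cos t + tan t) 0 := by
    rw [hseries.iteratedDeriv_eq_factorial_mul,
      mul_div_cancel₀ _ (by exact_mod_cast n.factorial_ne_zero)]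
  intro n
  simp only [hA_eq]
  exact iteratedDeriv_add_two_eq_sum_of_deriv_deriv_eq_mul hseries.analyticAt
    (deriv_deriv_sec_add_tan_eventuallyEq (by simp)) n
end
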